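/- arXiv:0708.1073 — 2 statements merged into one kernel-verified Lean document; each statement's English description precedes it below -/
import Mathlib

section
/- Let F : ℝ → ℝ be three times continuously differentiable with bounded first, second and third derivatives, let σ₀, A ∈ ℝ, let γ ≥ 0, and let μ be the standard Gaussian measure N(0,1) on ℝ. Then, as ε → 0 from the right, ∫ F(σ₀ + ε·A + √(ε·γ)·y) dμ(y) − F(σ₀) − ε·(F′(σ₀)·A + (1/2)·F″(σ₀)·γ) = o(ε); that is, the bias of F(σ) for the perturbed parameter σ = σ₀ + εA + √(εγ)·Y with Y standard Gaussian equals ε·(F′(σ₀)A + ½F″(σ₀)γ) up to o(ε). -/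
/-!
Expand `F` to second order around `σ₀`. The Taylor polynomial integrates exactly against `Y`,
since `E Y = 0` and `E Y² = 1`, giving `F σ₀ + F′(σ₀) ε A + ½ F″(σ₀) (ε² A² + ε γ)`. The
remainder is bounded by `C |ε A + √(ε γ) Y|³` with `C` a bound on `F‴`; for `ε ≤ 1` this is at most
`ε^{3/2} C (|A| + √γ |Y|)³`, whose expectation is finite, so the remainder is `O(ε^{3/2}) = o(ε)`.
-/

open MeasureTheory ProbabilityTheory Filter Asymptotics Topology
open scoped NNReal

theorem abs_le_mul_abs_pow_succ_of_hasDerivAt {g g' : ℝ → ℝ} {C : ℝ} {n : ℕ}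
    (hg : ∀ t, HasDerivAt g (g' t) t) (hg0 : g 0 = 0) (hg' : ∀ t, |g' t| ≤ C * |t| ^ n)
    (x : ℝ) : |g x| ≤ C * |x| ^ (n + 1) := by
  have hC : 0 ≤ C := by simpa using (abs_nonneg _).trans (hg' 1)
  have hbound : ∀ t ∈ Set.uIcc 0 x, ‖g' t‖ ≤ C * |x| ^ n := fun t ht => by
    have : |t| ≤ |x| := by simpa using Set.abs_sub_left_of_mem_uIcc ht
    exact (hg' t).trans (by gcongr)
  have := (convex_uIcc 0 x).norm_image_sub_le_of_norm_hasDerivWithin_le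
    (fun t _ => (hg t).hasDerivWithinAt) hbound Set.left_mem_uIcc Set.right_mem_uIcc
  simpa [hg0, pow_succ, mul_assoc] using this

noncomputable def quadraticTaylorRemainder (F : ℝ → ℝ) (x₀ x : ℝ) : ℝ :=
  F (x₀ + x) - F x₀ - deriv F x₀ * x - 1 / 2 * deriv (deriv F) x₀ * x ^ 2

theorem abs_quadraticTaylorRemainder_le {F : ℝ → ℝ} (hF : ContDiff ℝ 3 F) {C : ℝ}
    (hC : ∀ x, |deriv (deriv (deriv F)) x| ≤ C) (x₀ x : ℝ) :
    |quadraticTaylorRemainder F x₀ x| ≤ C * |x| ^ 3 := by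
  have hF₀ : Differentiable ℝ F := hF.differentiable (by norm_num)
  have hF₁ : Differentiable ℝ (deriv F) :=
    (hF.iterate_deriv' 2 1).differentiable (by norm_num)
  have hF₂ : Differentiable ℝ (deriv (deriv F)) :=
    (hF.iterate_deriv' 1 2).differentiable (by norm_num)
  -- The mean value inequality, applied to `F″`, then `F′`, then `F`, each time minus its Taylor
  -- polynomial at `x₀`, gains one power of `|t|`.
  have h₂ : ∀ t, |deriv (deriv F) (x₀ + t) - deriv (deriv F) x₀| ≤ C * |t| ^ 1 :=
    abs_le_mul_abs_pow_succ_of_hasDerivAt (n := 0)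
      (fun t => ((hF₂ _).hasDerivAt.comp_const_add x₀ t).sub_const _) (by simp)
      (fun t => by simpa using hC (x₀ + t))
  have h₁ : ∀ t, |deriv F (x₀ + t) - deriv F x₀ - deriv (deriv F) x₀ * t| ≤ C * |t| ^ 2 :=
    abs_le_mul_abs_pow_succ_of_hasDerivAt
      (fun t => by
        simpa using (((hF₁ _).hasDerivAt.comp_const_add x₀ t).sub_const _).fun_sub
          ((hasDerivAt_id t).const_mul (deriv (deriv F) x₀)))
      (by simp) h₂
  exact abs_le_mul_abs_pow_succ_of_hasDerivAt
    (fun t => (((((hF₀ _).hasDerivAt.comp_const_add x₀ t).sub_const (F x₀)).fun_sub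
      ((hasDerivAt_id t).const_mul (deriv F x₀))).fun_sub
      ((hasDerivAt_pow 2 t).const_mul (1 / 2 * deriv (deriv F) x₀))).congr_deriv (by simp; ring))
    (by simp) h₁ x

section Moments

variable {ν : Measure ℝ} [IsProbabilityMeasure ν] {F : ℝ → ℝ} {C : ℝ}

theorem integrable_const_add_mul_abs_pow_three (h3 : MemLp id 3 ν) {c d : ℝ} (hc : 0 ≤ c)
    (hd : 0 ≤ d) : Integrable (fun y => (c + d * |y|) ^ 3) ν := by
  have : MemLp (fun y => c + d * ‖id y‖) (3 : ℕ) ν :=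
    (memLp_const c).add (h3.norm.const_mul d)
  refine (this.integrable_norm_pow (by norm_num)).congr (Eventually.of_forall fun y => ?_)
  simp only [id, Real.norm_eq_abs]
  rw [abs_of_nonneg (by positivity)]

theorem abs_quadraticTaylorRemainder_const_add_mul_le (hF : ContDiff ℝ 3 F)
    (hC : ∀ x, |deriv (deriv (deriv F)) x| ≤ C) (x₀ a b y : ℝ) :
    |quadraticTaylorRemainder F x₀ (a + b * y)| ≤ C * (|a| + |b| * |y|) ^ 3 := by
  have hC₀ : 0 ≤ C := (abs_nonneg _).trans (hC 0)
  calc |quadraticTaylorRemainder F x₀ (a + b * y)| ≤ C * |a + b * y| ^ 3 :=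
        abs_quadraticTaylorRemainder_le hF hC x₀ _
    _ ≤ C * (|a| + |b| * |y|) ^ 3 := by
        gcongr
        exact (abs_add_le _ _).trans_eq (by rw [abs_mul])

theorem integrable_quadraticTaylorRemainder_const_add_mul (hF : ContDiff ℝ 3 F)
    (hC : ∀ x, |deriv (deriv (deriv F)) x| ≤ C) (h3 : MemLp id 3 ν) (x₀ a b : ℝ) :
    Integrable (fun y => quadraticTaylorRemainder F x₀ (a + b * y)) ν := by
  refine ((integrable_const_add_mul_abs_pow_three h3 (abs_nonneg a) (abs_nonneg b)).const_mul
    C).mono' ?_ (Eventually.of_forall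
      fun y => abs_quadraticTaylorRemainder_const_add_mul_le hF hC x₀ a b y)
  have : Continuous F := hF.continuous
  unfold quadraticTaylorRemainder
  fun_prop

theorem integral_quadratic_const_add_mul (h2 : MemLp id 2 ν) (hmean : ∫ y, y ∂ν = 0)
    (hsq : ∫ y, y ^ 2 ∂ν = 1) (p q r a b : ℝ) :
    ∫ y, (p + q * (a + b * y) + r * (a + b * y) ^ 2) ∂ν = p + q * a + r * (a ^ 2 + b ^ 2) := by
  have h1 : Integrable (fun y : ℝ => y) ν := h2.integrable one_le_two
  have h2' : Integrable (fun y : ℝ => y ^ 2) ν := h2.integrable_sq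
  have : (fun y => p + q * (a + b * y) + r * (a + b * y) ^ 2)
      = fun y => (p + q * a + r * a ^ 2) + (q * b + 2 * r * a * b) * y + r * b ^ 2 * y ^ 2 := by
    ext y; ring
  rw [this, integral_add ((integrable_const _).fun_add (h1.const_mul _)) (h2'.const_mul _),
    integral_add (integrable_const _) (h1.const_mul _),
    integral_const_mul, integral_const_mul, hmean, hsq]
  simp; ring

theorem integral_comp_const_add_mul_eq_taylor (hF : ContDiff ℝ 3 F)
    (hC : ∀ x, |deriv (deriv (deriv F)) x| ≤ C) (h3 : MemLp id 3 ν) (hmean : ∫ y, y ∂ν = 0)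
    (hsq : ∫ y, y ^ 2 ∂ν = 1) (x₀ a b : ℝ) :
    ∫ y, F (x₀ + a + b * y) ∂ν
      = F x₀ + deriv F x₀ * a + 1 / 2 * deriv (deriv F) x₀ * (a ^ 2 + b ^ 2)
        + ∫ y, quadraticTaylorRemainder F x₀ (a + b * y) ∂ν := by
  have h2 : MemLp id 2 ν := h3.mono_exponent (by norm_num)
  have hpoly : Integrable (fun y => F x₀ + deriv F x₀ * (a + b * y)
      + 1 / 2 * deriv (deriv F) x₀ * (a + b * y) ^ 2) ν := by
    have hZ : MemLp (fun y => a + b * y) 2 ν := (memLp_const a).add (h2.const_mul b)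
    exact ((integrable_const _).fun_add ((hZ.integrable one_le_two).const_mul _)).fun_add
      (hZ.integrable_sq.const_mul _)
  have : (fun y => F (x₀ + a + b * y)) = fun y => (F x₀ + deriv F x₀ * (a + b * y)
      + 1 / 2 * deriv (deriv F) x₀ * (a + b * y) ^ 2)
        + quadraticTaylorRemainder F x₀ (a + b * y) := by
    ext y; simp only [quadraticTaylorRemainder, add_assoc]; ring
  rw [this, integral_add hpoly (integrable_quadraticTaylorRemainder_const_add_mul hF hC h3 x₀ a b),
    integral_quadratic_const_add_mul h2 hmean hsq]

theorem abs_integral_quadraticTaylorRemainder_const_add_mul_le (hF : ContDiff ℝ 3 F)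
    (hC : ∀ x, |deriv (deriv (deriv F)) x| ≤ C) (h3 : MemLp id 3 ν) (x₀ a b : ℝ) :
    |∫ y, quadraticTaylorRemainder F x₀ (a + b * y) ∂ν| ≤ C * ∫ y, (|a| + |b| * |y|) ^ 3 ∂ν := by
  rw [← integral_const_mul]
  exact norm_integral_le_of_norm_le
    ((integrable_const_add_mul_abs_pow_three h3 (abs_nonneg a) (abs_nonneg b)).const_mul C)
    (Eventually.of_forall fun y =>
      (Real.norm_eq_abs _).trans_le (abs_quadraticTaylorRemainder_const_add_mul_le hF hC x₀ a b y))

end Moments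

theorem isLittleO_mul_sqrt_nhdsGT_zero : (fun ε : ℝ => ε * √ε) =o[𝓝[>] 0] fun ε => ε := by
  have : Tendsto (fun ε : ℝ => √ε) (𝓝[>] 0) (𝓝 0) := by
    simpa using (Real.continuous_sqrt.tendsto 0).mono_left nhdsWithin_le_nhds
  simpa using (isBigO_refl (fun ε : ℝ => ε) _).mul_isLittleO ((isLittleO_one_iff ℝ).mpr this)

theorem abs_mul_add_abs_sqrt_mul_le {ε : ℝ} (hε₀ : 0 ≤ ε) (hε₁ : ε ≤ 1) (A γ y : ℝ) :
    |ε * A| + |√(ε * γ)| * |y| ≤ √ε * (|A| + √γ * |y|) := by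
  have hε : ε ≤ √ε := by
    nlinarith [Real.sq_sqrt hε₀, Real.sqrt_le_one.mpr hε₁, Real.sqrt_nonneg ε]
  rw [abs_mul, abs_of_nonneg hε₀, abs_of_nonneg (Real.sqrt_nonneg _), Real.sqrt_mul hε₀, mul_add,
    ← mul_assoc]
  gcongr

theorem isLittleO_integral_perturbed_sub_bias {F : ℝ → ℝ} (hF : ContDiff ℝ 3 F) {C : ℝ}
    (hC : ∀ x, |deriv (deriv (deriv F)) x| ≤ C) {ν : Measure ℝ} [IsProbabilityMeasure ν]
    (h3 : MemLp id 3 ν) (hmean : ∫ y, y ∂ν = 0) (hsq : ∫ y, y ^ 2 ∂ν = 1)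
    (σ₀ A γ : ℝ) (hγ : 0 ≤ γ) :
    (fun ε : ℝ => (∫ y, F (σ₀ + ε * A + √(ε * γ) * y) ∂ν) - F σ₀
        - ε * (deriv F σ₀ * A + 1 / 2 * deriv (deriv F) σ₀ * γ)) =o[𝓝[>] 0] fun ε => ε := by
  have hC₀ : 0 ≤ C := (abs_nonneg _).trans (hC 0)
  set K := ∫ y, (|A| + √γ * |y|) ^ 3 ∂ν
  have hK : Integrable (fun y => (|A| + √γ * |y|) ^ 3) ν :=
    integrable_const_add_mul_abs_pow_three h3 (abs_nonneg A) (Real.sqrt_nonneg γ)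
  refine IsBigO.trans_isLittleO ?_ isLittleO_mul_sqrt_nhdsGT_zero
  refine IsBigO.of_bound (C * K + 1 / 2 * |deriv (deriv F) σ₀| * A ^ 2) ?_
  filter_upwards [Ioc_mem_nhdsGT one_pos] with ε ⟨hε₀, hε₁⟩
  have hcube : √ε ^ 3 = ε * √ε := by rw [pow_succ, Real.sq_sqrt hε₀.le]
  have hsq_le : ε ^ 2 ≤ ε * √ε := by
    nlinarith [Real.sq_sqrt hε₀.le, Real.sqrt_le_one.mpr hε₁, Real.sqrt_nonneg ε]
  have hrem : |∫ y, quadraticTaylorRemainder F σ₀ (ε * A + √(ε * γ) * y) ∂ν|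
      ≤ C * K * (ε * √ε) := calc
    _ ≤ C * ∫ y, (|ε * A| + |√(ε * γ)| * |y|) ^ 3 ∂ν :=
      abs_integral_quadraticTaylorRemainder_const_add_mul_le hF hC h3 σ₀ _ _
    _ ≤ C * ∫ y, ε * √ε * (|A| + √γ * |y|) ^ 3 ∂ν := by
      refine mul_le_mul_of_nonneg_left (integral_mono (integrable_const_add_mul_abs_pow_three h3
        (abs_nonneg _) (abs_nonneg _)) (hK.const_mul _) fun y => ?_) hC₀
      rw [← hcube, ← mul_pow]
      gcongr
      exact abs_mul_add_abs_sqrt_mul_le hε₀.le hε₁ A γ y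
    _ = C * K * (ε * √ε) := by rw [integral_const_mul]; ring
  rw [Real.norm_eq_abs, Real.norm_eq_abs, abs_of_nonneg (by positivity : 0 ≤ ε * √ε),
    integral_comp_const_add_mul_eq_taylor hF hC h3 hmean hsq, Real.sq_sqrt (by positivity)]
  calc _ = |(∫ y, quadraticTaylorRemainder F σ₀ (ε * A + √(ε * γ) * y) ∂ν)
        + 1 / 2 * deriv (deriv F) σ₀ * A ^ 2 * ε ^ 2| := by ring_nf
    _ ≤ C * K * (ε * √ε) + 1 / 2 * |deriv (deriv F) σ₀| * A ^ 2 * (ε * √ε) := by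
      refine (abs_add_le _ _).trans (add_le_add hrem ?_)
      rw [abs_mul, abs_mul, abs_mul, abs_of_nonneg (sq_nonneg A), abs_of_nonneg (sq_nonneg ε)]
      gcongr
      norm_num
    _ = _ := by ring

theorem integral_sq_gaussianReal (m : ℝ) (v : ℝ≥0) :
    ∫ y, y ^ 2 ∂gaussianReal m v = m ^ 2 + v := by
  have := variance_eq_sub (memLp_id_gaussianReal' (μ := m) (v := v) 2 (by norm_num))
  rw [variance_id_gaussianReal] at this
  simp [this]

theorem bias_of_perturbed_parameter_general
    (F : ℝ → ℝ) (hF : ContDiff ℝ 3 F)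
    (hF3 : ∃ C, ∀ x, |deriv (deriv (deriv F)) x| ≤ C)
    (σ₀ A γ : ℝ) (hγ : 0 ≤ γ) :
    (fun ε : ℝ =>
        (∫ y, F (σ₀ + ε * A + Real.sqrt (ε * γ) * y) ∂(gaussianReal 0 1))
          - F σ₀ - ε * (deriv F σ₀ * A + (1 / 2) * deriv (deriv F) σ₀ * γ))
      =o[nhdsWithin 0 (Set.Ioi 0)] (fun ε : ℝ => ε) := by
  obtain ⟨C, hC⟩ := hF3
  exact isLittleO_integral_perturbed_sub_bias hF hC (memLp_id_gaussianReal' 3 (by norm_num))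
    integral_id_gaussianReal (by simp [integral_sq_gaussianReal]) σ₀ A γ hγ

/-- Bias of `F(σ)` for the perturbed parameter `σ = σ₀ + εA + √(εγ)·Y`,
`Y` standard Gaussian, equals `ε·(F′(σ₀)A + ½F″(σ₀)γ)` up to `o(ε)` as `ε → 0⁺`. -/
theorem bias_of_perturbed_parameter
    (F : ℝ → ℝ) (hF : ContDiff ℝ 3 F)
    (hF1 : ∃ C, ∀ x, |deriv F x| ≤ C)
    (hF2 : ∃ C, ∀ x, |deriv (deriv F) x| ≤ C)
    (hF3 : ∃ C, ∀ x, |deriv (deriv (deriv F)) x| ≤ C)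
    (σ₀ A γ : ℝ) (hγ : 0 ≤ γ) :
    (fun ε : ℝ =>
        (∫ y, F (σ₀ + ε * A + Real.sqrt (ε * γ) * y) ∂(gaussianReal 0 1))
          - F σ₀ - ε * (deriv F σ₀ * A + (1 / 2) * deriv (deriv F) σ₀ * γ))
      =o[nhdsWithin 0 (Set.Ioi 0)] (fun ε : ℝ => ε) :=
  bias_of_perturbed_parameter_general F hF hF3 σ₀ A γ hγ
end

section
/- Let F : ℝ → ℝ be twice continuously differentiable with bounded first and second derivatives, let σ₀, A ∈ ℝ, let γ ≥ 0, and let μ be the standard Gaussian measure N(0,1) on ℝ. Then, as ε → 0 from the right, ∫ (F(σ₀ + ε·A + √(ε·γ)·y) − F(σ₀))² dμ(y) − ε·(F′(σ₀))²·γ = o(ε); that is, the quadratic error of F(σ) for the perturbed parameter σ = σ₀ + εA + √(εγ)·Y equals ε·(F′(σ₀))²·γ up to o(ε). -/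
/-!
Write `h = εA + √(εγ)·Y`. If `|F'| ≤ C₁` and `|F''| ≤ C₂`, a second-order Taylor bound gives
`|(F(σ₀ + h) - F(σ₀))² - F'(σ₀)² h²| ≤ 2 C₁ C₂ |h|³`, and `E[h²] = ε²A² + εγ`.
Since `h = √ε (√ε A + √γ Y)`, `E|h|³ = O(ε^{3/2})` for `ε ≤ 1`, so the error is
`O(ε^{3/2}) + O(ε²) = o(ε)`.
-/

open MeasureTheory ProbabilityTheory Filter Asymptotics
open scoped NNReal

namespace ProbabilityTheory

lemma integral_sq_gaussianReal (m : ℝ) (v : ℝ≥0) : ∫ x, x ^ 2 ∂gaussianReal m v = m ^ 2 + v := by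
  have h := variance_eq_sub (memLp_id_gaussianReal' (μ := m) (v := v) 2 (by simp))
  simp only [variance_id_gaussianReal, Pi.pow_apply, id_eq, integral_id_gaussianReal] at h
  linarith

lemma integral_add_mul_sq_gaussianReal (m : ℝ) (v : ℝ≥0) (a s : ℝ) :
    ∫ x, (a + s * x) ^ 2 ∂gaussianReal m v = (a + s * m) ^ 2 + s ^ 2 * v := by
  have hX := memLp_id_gaussianReal' (μ := m) (v := v) 2 (by simp)
  have h1 : Integrable (fun x : ℝ => x) (gaussianReal m v) := hX.integrable one_le_two
  have h2 : Integrable (fun x : ℝ => x ^ 2) (gaussianReal m v) := hX.integrable_sq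
  have e : (fun x : ℝ => (a + s * x) ^ 2)
      = fun x => a ^ 2 + ((2 * a * s) * x + s ^ 2 * x ^ 2) := by
    ext x; ring
  have h12 : Integrable (fun x : ℝ => 2 * a * s * x + s ^ 2 * x ^ 2) (gaussianReal m v) :=
    (h1.const_mul _).add (h2.const_mul _)
  rw [e, integral_add (integrable_const _) h12,
    integral_add (h1.const_mul _) (h2.const_mul _), integral_const_mul,
    integral_const_mul, integral_id_gaussianReal, integral_sq_gaussianReal]
  simp only [integral_const, probReal_univ, smul_eq_mul, one_mul]
  ring

lemma memLp_const_add_mul_gaussianReal (m : ℝ) (v : ℝ≥0) (a s : ℝ) (p : ℝ≥0) :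
    MemLp (fun x => a + s * x) p (gaussianReal m v) :=
  (memLp_const a).add ((memLp_id_gaussianReal p).const_mul s)

lemma integrable_abs_const_add_mul_pow_gaussianReal (m : ℝ) (v : ℝ≥0) (a s : ℝ) (n : ℕ) :
    Integrable (fun x => |a + s * x| ^ n) (gaussianReal m v) := by
  simpa using (memLp_const_add_mul_gaussianReal m v a s n).integrable_norm_pow'

end ProbabilityTheory

section DerivativeBounds

variable {f : ℝ → ℝ} {C₁ C₂ : ℝ}

lemma abs_sub_le_mul_of_abs_deriv_le (hf : Differentiable ℝ f) (hC : ∀ x, |deriv f x| ≤ C₁)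
    (a b : ℝ) : |f b - f a| ≤ C₁ * |b - a| := by
  simpa only [Real.norm_eq_abs] using Convex.norm_image_sub_le_of_norm_deriv_le
    (fun x _ => hf x) (fun x _ => hC x) convex_univ (Set.mem_univ a) (Set.mem_univ b)

lemma abs_sub_sub_deriv_mul_le (hf : ContDiff ℝ 2 f) (hC₂ : ∀ x, |deriv (deriv f) x| ≤ C₂)
    (x h : ℝ) : |f (x + h) - f x - deriv f x * h| ≤ C₂ * h ^ 2 := by
  have hf₁ : Differentiable ℝ f := hf.differentiable two_ne_zero
  have hf₂ : Differentiable ℝ (deriv f) :=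
    (contDiff_succ_iff_deriv.mp hf).2.2.differentiable one_ne_zero
  -- `g` has derivative `f' - f'(x)`, which is `C₂ |h|`-small between `x` and `x + h`.
  set g : ℝ → ℝ := fun y => f y - deriv f x * y
  have hg : ∀ y, HasDerivAt g (deriv f y - deriv f x) y := fun y => by
    have := (hf₁ y).hasDerivAt.sub ((hasDerivAt_id' y).const_mul (deriv f x))
    rwa [mul_one] at this
  have hg' : ∀ y ∈ Set.uIcc x (x + h), ‖deriv g y‖ ≤ C₂ * |h| := fun y hy => by
    rw [(hg y).deriv, Real.norm_eq_abs]
    calc |deriv f y - deriv f x| ≤ C₂ * |y - x| := abs_sub_le_mul_of_abs_deriv_le hf₂ hC₂ x y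
      _ ≤ C₂ * |h| := mul_le_mul_of_nonneg_left (by simpa using Set.abs_sub_left_of_mem_uIcc hy)
        ((abs_nonneg _).trans (hC₂ x))
  have key := Convex.norm_image_sub_le_of_norm_deriv_le (fun y _ => (hg y).differentiableAt) hg'
    (convex_uIcc x (x + h)) Set.left_mem_uIcc Set.right_mem_uIcc
  have e : g (x + h) - g x = f (x + h) - f x - deriv f x * h := by simp only [g]; ring
  rwa [e, Real.norm_eq_abs, Real.norm_eq_abs, add_sub_cancel_left, mul_assoc, abs_mul_abs_self,
    ← sq] at key

lemma abs_sq_sub_sq_deriv_mul_le (hf : ContDiff ℝ 2 f) (hC₁ : ∀ x, |deriv f x| ≤ C₁)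
    (hC₂ : ∀ x, |deriv (deriv f) x| ≤ C₂) (x h : ℝ) :
    |(f (x + h) - f x) ^ 2 - (deriv f x * h) ^ 2| ≤ 2 * C₁ * C₂ * |h| ^ 3 := by
  have hC₁_nonneg : 0 ≤ C₁ := (abs_nonneg _).trans (hC₁ 0)
  have hC₂_nonneg : 0 ≤ C₂ := (abs_nonneg _).trans (hC₂ 0)
  have hdiff : |f (x + h) - f x| ≤ C₁ * |h| := by
    simpa using abs_sub_le_mul_of_abs_deriv_le (hf.differentiable two_ne_zero) hC₁ x (x + h)
  have hlin : |deriv f x * h| ≤ C₁ * |h| := by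
    rw [abs_mul]; gcongr; exact hC₁ x
  rw [sq_sub_sq, abs_mul, mul_comm]
  calc |f (x + h) - f x - deriv f x * h| * |f (x + h) - f x + deriv f x * h|
      ≤ C₂ * h ^ 2 * (C₁ * |h| + C₁ * |h|) := by
        gcongr
        · exact abs_sub_sub_deriv_mul_le hf hC₂ x h
        · exact (abs_add_le _ _).trans (add_le_add hdiff hlin)
    _ = 2 * C₁ * C₂ * |h| ^ 3 := by rw [← sq_abs h]; ring

lemma abs_integral_sq_sub_deriv_sq_mul_le {Ω : Type*} [MeasurableSpace Ω] {μ : Measure Ω}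
    {h : Ω → ℝ} (hf : ContDiff ℝ 2 f) (hC₁ : ∀ x, |deriv f x| ≤ C₁)
    (hC₂ : ∀ x, |deriv (deriv f) x| ≤ C₂) (hh₂ : MemLp h 2 μ) (hh₃ : MemLp h 3 μ) (x : ℝ) :
    |∫ ω, (f (x + h ω) - f x) ^ 2 ∂μ - deriv f x ^ 2 * ∫ ω, h ω ^ 2 ∂μ|
      ≤ 2 * C₁ * C₂ * ∫ ω, |h ω| ^ 3 ∂μ := by
  have hsq : Integrable (fun ω => h ω ^ 2) μ := hh₂.integrable_sq
  have hcube : Integrable (fun ω => |h ω| ^ 3) μ := by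
    simpa using hh₃.integrable_norm_pow (p := 3) three_ne_zero
  have hincr : Integrable (fun ω => (f (x + h ω) - f x) ^ 2) μ := by
    refine (hsq.const_mul (C₁ ^ 2)).mono'
      (((hf.continuous.comp_aestronglyMeasurable (hh₂.1.const_add x)).sub
        aestronglyMeasurable_const).pow 2) (ae_of_all _ fun ω => ?_)
    have := abs_sub_le_mul_of_abs_deriv_le (hf.differentiable two_ne_zero) hC₁ x (x + h ω)
    rw [add_sub_cancel_left] at this
    calc ‖(f (x + h ω) - f x) ^ 2‖ = |f (x + h ω) - f x| ^ 2 := by simp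
      _ ≤ (C₁ * |h ω|) ^ 2 := by gcongr
      _ = C₁ ^ 2 * h ω ^ 2 := by rw [mul_pow, sq_abs]
  rw [← integral_const_mul, ← integral_sub hincr (hsq.const_mul _), ← integral_const_mul]
  refine (Real.norm_eq_abs _).symm.trans_le
    (norm_integral_le_of_norm_le (hcube.const_mul _) (ae_of_all _ fun ω => ?_))
  rw [Real.norm_eq_abs, ← mul_pow]
  exact abs_sq_sub_sq_deriv_mul_le hf hC₁ hC₂ x (h ω)

end DerivativeBounds

lemma integral_abs_perturbation_cube_le (A : ℝ) {γ ε : ℝ} (hε : 0 ≤ ε) (hε₁ : ε ≤ 1) :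
    ∫ y, |ε * A + √(ε * γ) * y| ^ 3 ∂gaussianReal 0 1
      ≤ ε * √ε * ∫ y, (|A| + √γ * |y|) ^ 3 ∂gaussianReal 0 1 := by
  have hM : Integrable (fun y => (|A| + √γ * |y|) ^ 3) (gaussianReal 0 1) := by
    have hmem : MemLp (fun y : ℝ => |A| + √γ * ‖y‖) (3 : ℕ) (gaussianReal 0 1) :=
      (memLp_const |A|).add
        ((memLp_id_gaussianReal' (μ := 0) (v := 1) _ (ENNReal.natCast_ne_top 3)).norm.const_mul √γ)
    refine hmem.integrable_norm_pow'.congr (ae_of_all _ fun y => ?_)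
    simp only [Real.norm_eq_abs]
    rw [abs_of_nonneg (by positivity)]
  rw [← integral_const_mul]
  refine integral_mono (integrable_abs_const_add_mul_pow_gaussianReal 0 1 _ _ 3) (hM.const_mul _)
    fun y => ?_
  have hsqrt : √ε ≤ 1 := Real.sqrt_le_one.mpr hε₁
  have hfactor : |ε * A + √(ε * γ) * y| ≤ √ε * (|A| + √γ * |y|) := by
    have hsplit : ε * A + √(ε * γ) * y = √ε * (√ε * A + √γ * y) := by
      rw [Real.sqrt_mul hε]
      linear_combination (-A) * Real.mul_self_sqrt hε
    rw [hsplit, abs_mul, abs_of_nonneg (Real.sqrt_nonneg ε)]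
    gcongr
    calc |√ε * A + √γ * y| ≤ |√ε * A| + |√γ * y| := abs_add_le _ _
      _ ≤ |A| + √γ * |y| := by
        rw [abs_mul, abs_mul, abs_of_nonneg (Real.sqrt_nonneg ε),
          abs_of_nonneg (Real.sqrt_nonneg γ)]
        gcongr
        exact mul_le_of_le_one_left (abs_nonneg A) hsqrt
  calc |ε * A + √(ε * γ) * y| ^ 3 ≤ (√ε * (|A| + √γ * |y|)) ^ 3 := by gcongr
    _ = ε * √ε * (|A| + √γ * |y|) ^ 3 := by
      rw [mul_pow, pow_succ, sq, Real.mul_self_sqrt hε]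

lemma abs_integral_perturbed_sq_sub_le {F : ℝ → ℝ} {C₁ C₂ : ℝ} (hF : ContDiff ℝ 2 F)
    (hC₁ : ∀ x, |deriv F x| ≤ C₁) (hC₂ : ∀ x, |deriv (deriv F) x| ≤ C₂)
    (σ₀ A : ℝ) {γ ε : ℝ} (hγ : 0 ≤ γ) (hε : 0 ≤ ε) (hε₁ : ε ≤ 1) :
    |(∫ y, (F (σ₀ + ε * A + √(ε * γ) * y) - F σ₀) ^ 2 ∂gaussianReal 0 1)
        - ε * deriv F σ₀ ^ 2 * γ|
      ≤ (2 * C₁ * C₂ * ∫ y, (|A| + √γ * |y|) ^ 3 ∂gaussianReal 0 1 + deriv F σ₀ ^ 2 * A ^ 2)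
        * (ε * √ε) := by
  have hmoment : ∫ y, (ε * A + √(ε * γ) * y) ^ 2 ∂gaussianReal 0 1 = ε ^ 2 * A ^ 2 + ε * γ := by
    rw [integral_add_mul_sq_gaussianReal, Real.sq_sqrt (mul_nonneg hε hγ)]
    push_cast; ring
  have htaylor := abs_integral_sq_sub_deriv_sq_mul_le hF hC₁ hC₂
    (memLp_const_add_mul_gaussianReal 0 1 (ε * A) √(ε * γ) 2)
    (memLp_const_add_mul_gaussianReal 0 1 (ε * A) √(ε * γ) 3) σ₀
  rw [hmoment] at htaylor
  have hC : 0 ≤ 2 * C₁ * C₂ := by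
    have := (abs_nonneg _).trans (hC₁ 0)
    have := (abs_nonneg _).trans (hC₂ 0)
    positivity
  have hε_sq : ε ^ 2 ≤ ε * √ε := by
    rw [sq]
    exact mul_le_mul_of_nonneg_left (Real.le_sqrt_self_iff.mpr hε₁) hε
  simp_rw [add_assoc σ₀]
  calc _ = |(∫ y, (F (σ₀ + (ε * A + √(ε * γ) * y)) - F σ₀) ^ 2 ∂gaussianReal 0 1
          - deriv F σ₀ ^ 2 * (ε ^ 2 * A ^ 2 + ε * γ)) + deriv F σ₀ ^ 2 * A ^ 2 * ε ^ 2| := by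
        congr 1; ring
    _ ≤ 2 * C₁ * C₂ * (ε * √ε * ∫ y, (|A| + √γ * |y|) ^ 3 ∂gaussianReal 0 1)
          + deriv F σ₀ ^ 2 * A ^ 2 * (ε * √ε) := by
        refine (abs_add_le _ _).trans (add_le_add ?_ ?_)
        · exact htaylor.trans
            (mul_le_mul_of_nonneg_left (integral_abs_perturbation_cube_le A hε hε₁) hC)
        · rw [abs_of_nonneg (by positivity)]
          exact mul_le_mul_of_nonneg_left hε_sq (by positivity)
    _ = _ := by ring

lemma isLittleO_mul_sqrt_self : (fun ε : ℝ => ε * √ε) =o[nhds 0] fun ε => ε := by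
  have hsqrt : (fun ε : ℝ => √ε) =o[nhds 0] fun _ => (1 : ℝ) :=
    (isLittleO_one_iff ℝ).mpr (by simpa using Real.continuous_sqrt.tendsto 0)
  simpa using (isBigO_refl (fun ε : ℝ => ε) (nhds 0)).mul_isLittleO hsqrt

/-- Quadratic error of `F(σ)` for the perturbed parameter `σ = σ₀ + εA + √(εγ)·Y`,
`Y` standard Gaussian, equals `ε·(F′(σ₀))²·γ` up to `o(ε)` as `ε → 0⁺`. -/
theorem quadratic_error_of_perturbed_parameter
    (F : ℝ → ℝ) (hF : ContDiff ℝ 2 F)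
    (hF1 : ∃ C, ∀ x, |deriv F x| ≤ C)
    (hF2 : ∃ C, ∀ x, |deriv (deriv F) x| ≤ C)
    (σ₀ A γ : ℝ) (hγ : 0 ≤ γ) :
    (fun ε : ℝ =>
        (∫ y, (F (σ₀ + ε * A + Real.sqrt (ε * γ) * y) - F σ₀) ^ 2 ∂(gaussianReal 0 1))
          - ε * (deriv F σ₀) ^ 2 * γ)
      =o[nhdsWithin 0 (Set.Ioi 0)] (fun ε : ℝ => ε) := by
  obtain ⟨C₁, hC₁⟩ := hF1
  obtain ⟨C₂, hC₂⟩ := hF2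
  refine IsBigO.trans_isLittleO ?_ (isLittleO_mul_sqrt_self.mono nhdsWithin_le_nhds)
  refine .of_bound (2 * C₁ * C₂ * ∫ y, (|A| + √γ * |y|) ^ 3 ∂gaussianReal 0 1
    + deriv F σ₀ ^ 2 * A ^ 2) ?_
  filter_upwards [Ioc_mem_nhdsGT one_pos] with ε ⟨hε, hε₁⟩
  rw [Real.norm_eq_abs, Real.norm_eq_abs, abs_of_nonneg (by positivity : 0 ≤ ε * √ε)]
  exact abs_integral_perturbed_sq_sub_le hF hC₁ hC₂ σ₀ A hγ hε.le hε₁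
end
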